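/- arXiv:2410.21084 — 3 statements merged into one kernel-verified Lean document; each statement's English description precedes it below -/
import Mathlib

section
/- Let n ≥ 3 and let S_n be the star graph on vertices {0,1,...,n−1} with center 0. Then the monoid of partial weak endomorphisms of S_n has cardinality |PwEnd(S_n)| = 2·(n+1)^{n−1} + (n−1)·3^{n−1}. -/
variable {V : Type*}

/-- Partial transformations of `V`. -/
abbrev PTrans (V : Type*) := V → Option V

/-- Monoid of partial transformations under (left-to-right) composition. -/
instance : Monoid (PTrans V) where
  mul f g := fun v => (f v).bind g
  one := fun v => some v
  mul_assoc f g h := by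
    funext v
    show ((f v).bind g).bind h = (f v).bind (fun x => (g x).bind h)
    cases f v <;> simp
  one_mul f := by funext v; rfl
  mul_one f := by
    funext v
    show (f v).bind (fun x => some x) = f v
    cases f v <;> simp

/-- Domain of a partial transformation. -/
def pdom (α : PTrans V) : Set V := {u | α u ≠ none}

/-- Image of a partial transformation. -/
def pim (α : PTrans V) : Set V := {v | ∃ u, α u = some v}

def IsPEnd (G : SimpleGraph V) (α : PTrans V) : Prop :=
  ∀ u v u' v', α u = some u' → α v = some v' → G.Adj u v → G.Adj u' v'

def IsPwEnd (G : SimpleGraph V) (α : PTrans V) : Prop :=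
  ∀ u v u' v', α u = some u' → α v = some v' → G.Adj u v → u' ≠ v' → G.Adj u' v'

def IsPsEnd (G : SimpleGraph V) (α : PTrans V) : Prop :=
  ∀ u v u' v', α u = some u' → α v = some v' → (G.Adj u v ↔ G.Adj u' v')

def IsPswEnd (G : SimpleGraph V) (α : PTrans V) : Prop :=
  ∀ u v u' v', α u = some u' → α v = some v' → ((G.Adj u v ∧ u' ≠ v') ↔ G.Adj u' v')

/-- Injectivity of a partial transformation. -/
def PInjective (α : PTrans V) : Prop :=
  ∀ u v w, α u = some w → α v = some w → u = v

open Classical in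
/-- The inverse of a partial (injective) transformation. -/
noncomputable def pinv (α : PTrans V) : PTrans V :=
  fun v => if h : ∃ u, α u = some v then some h.choose else none

/-- Partial automorphism: injective, and both it and its inverse are
partial endomorphisms. -/
def IsPAut (G : SimpleGraph V) (α : PTrans V) : Prop :=
  PInjective α ∧ IsPEnd G α ∧ IsPEnd G (pinv α)

/-- The star graph on vertices `{0,1,...,n-1}` with center `0`. -/
def starGraph (n : ℕ) : SimpleGraph (Fin n) :=
  SimpleGraph.fromRel (fun u _ => (u : ℕ) = 0)

/-!
The only edges of the star join the centre `0` to a leaf, so a partial map `α` is a weak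
endomorphism exactly when, in case `α 0` is a leaf `a`, every leaf is sent to `none`, `0` or `a`;
if `α 0` is `none` or `0`, the leaves are unconstrained. Summing over the value of `α 0` gives
`2 (n + 1) ^ (n - 1)` maps with `α 0 ∈ {none, 0}` and `3 ^ (n - 1)` for each of the `n - 1` leaves.
-/

open Finset

lemma card_subtype_forall_succ_mem {β : Type*} [Fintype β] [DecidableEq β] {m : ℕ}
    (T : β → Finset β) :
    Fintype.card {f : Fin (m + 1) → β // ∀ i : Fin m, f i.succ ∈ T (f 0)} = ∑ b, #(T b) ^ m := by
  let e : {f : Fin (m + 1) → β // ∀ i : Fin m, f i.succ ∈ T (f 0)} ≃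
      Σ b, {g : Fin m → β // ∀ i, g i ∈ T b} :=
    ((Fin.consEquiv fun _ => β).symm.subtypeEquiv fun _ => Iff.rfl).trans
      (Equiv.subtypeProdEquivSigmaSubtype fun b (g : Fin m → β) => ∀ i, g i ∈ T b)
  rw [Fintype.card_congr e, Fintype.card_sigma]
  refine sum_congr rfl fun b _ => ?_
  rw [Fintype.card_congr Equiv.subtypePiEquivPi, Fintype.card_pi]
  simp

section StarGraph

variable {m : ℕ}

lemma starGraph_adj {u v : Fin (m + 1)} :
    (starGraph (m + 1)).Adj u v ↔ u ≠ v ∧ (u = 0 ∨ v = 0) := by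
  simp only [starGraph, SimpleGraph.fromRel_adj, Ne, Fin.ext_iff, Fin.val_zero]

def leafTargets : Option (Fin (m + 1)) → Finset (Option (Fin (m + 1)))
  | some a => if a = 0 then univ else {none, some 0, some a}
  | none => univ

lemma mem_leafTargets_iff {b x : Option (Fin (m + 1))} :
    x ∈ leafTargets b ↔ ∀ a c, b = some a → x = some c → a ≠ c → a = 0 ∨ c = 0 := by
  rcases b with _ | a
  · simp [leafTargets]
  · by_cases ha : a = 0
    · simp +contextual [leafTargets, ha]
    · rcases x with _ | c
      · simp [leafTargets, ha]
      · by_cases hc : c = a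
        · simp [leafTargets, hc, ha]
        · simp [leafTargets, ha, hc, Ne.symm hc]

lemma isPwEnd_starGraph_iff {α : PTrans (Fin (m + 1))} :
    IsPwEnd (starGraph (m + 1)) α ↔ ∀ i : Fin m, α i.succ ∈ leafTargets (α 0) := by
  simp only [mem_leafTargets_iff]
  constructor
  · intro h i a c ha hc hac
    exact (starGraph_adj.mp (h 0 i.succ a c ha hc
      (starGraph_adj.mpr ⟨(Fin.succ_ne_zero i).symm, .inl rfl⟩) hac)).2
  · intro h u v u' v' hu hv huv hne
    refine starGraph_adj.mpr ⟨hne, ?_⟩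
    obtain ⟨-, rfl | rfl⟩ := starGraph_adj.mp huv
    · obtain ⟨i, rfl⟩ := Fin.exists_succ_eq.mpr (starGraph_adj.mp huv).1.symm
      exact h i u' v' hu hv hne
    · obtain ⟨i, rfl⟩ := Fin.exists_succ_eq.mpr (starGraph_adj.mp huv).1
      exact (h i v' u' hv hu hne.symm).symm

lemma card_leafTargets_some {a : Fin (m + 1)} (ha : a ≠ 0) : #(leafTargets (some a)) = 3 := by
  simp [leafTargets, ha, ha.symm]

end StarGraph

theorem stmt7 (n : ℕ) (hn : 3 ≤ n) :
    Nat.card {α : PTrans (Fin n) // IsPwEnd (starGraph n) α} =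
      2 * (n + 1) ^ (n - 1) + (n - 1) * 3 ^ (n - 1) := by
  obtain ⟨m, rfl⟩ : ∃ m, n = m + 1 := ⟨n - 1, by omega⟩
  classical
  rw [Nat.card_eq_fintype_card,
    Fintype.card_congr (Equiv.subtypeEquivRight fun _ => isPwEnd_starGraph_iff),
    card_subtype_forall_succ_mem, Fintype.sum_option, Fin.sum_univ_succ]
  simp only [card_leafTargets_some (Fin.succ_ne_zero _)]
  simp [leafTargets]
  ring
end

section
/- Let n ≥ 3 and let S_n be the star graph on vertices {0,1,...,n−1} with center 0. Then the monoid of partial automorphisms of S_n has cardinality |PAut(S_n)| = 1 + n² + 2·∑_{k=1}^{n−1} C(n−1,k)²·k!. -/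
variable {V : Type*}

/-! ### Auxiliary development -/

section Aux

open Finset

lemma pinv_eq_some_imp {α : PTrans V} {u v : V} (h : pinv α v = some u) :
    α u = some v := by
  by_cases hex : ∃ w, α w = some v
  · rw [pinv, dif_pos hex] at h
    obtain rfl : hex.choose = u := Option.some_inj.mp h
    exact hex.choose_spec
  · rw [pinv, dif_neg hex] at h
    exact absurd h (by simp)

lemma pinv_eq_some_of {α : PTrans V} (hinj : PInjective α) {u v : V}
    (h : α u = some v) : pinv α v = some u := by
  have hex : ∃ w, α w = some v := ⟨u, h⟩
  rw [pinv, dif_pos hex]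
  exact congrArg some (hinj _ _ _ hex.choose_spec h)

lemma isPAut_iff {G : SimpleGraph V} {α : PTrans V} :
    IsPAut G α ↔ PInjective α ∧ IsPsEnd G α := by
  constructor
  · rintro ⟨hinj, hend, hpend⟩
    refine ⟨hinj, fun u v u' v' hu hv => ⟨fun h => hend u v u' v' hu hv h, fun h => ?_⟩⟩
    exact hpend u' v' u v (pinv_eq_some_of hinj hu) (pinv_eq_some_of hinj hv) h
  · rintro ⟨hinj, hs⟩
    refine ⟨hinj, fun u v u' v' hu hv h => (hs u v u' v' hu hv).mp h, ?_⟩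
    intro u v u' v' hu hv h
    exact (hs u' v' u v (pinv_eq_some_imp hu) (pinv_eq_some_imp hv)).mpr h

variable {n : ℕ} [NeZero n]

lemma fin_val_zero_iff (a : Fin n) : (a : ℕ) = 0 ↔ a = 0 := by
  rw [Fin.ext_iff, Fin.val_zero]

lemma star_adj {u v : Fin n} :
    (starGraph n).Adj u v ↔ u ≠ v ∧ (u = 0 ∨ v = 0) := by
  rw [starGraph, SimpleGraph.fromRel_adj, fin_val_zero_iff, fin_val_zero_iff]

lemma psEnd_crit {α : PTrans (Fin n)} (hinj : PInjective α)
    (h : ∀ u v u' v', α u = some u' → α v = some v' → u ≠ v →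
      ((u = 0 ∨ v = 0) ↔ (u' = 0 ∨ v' = 0))) :
    IsPsEnd (starGraph n) α := by
  intro u v u' v' hu hv
  rcases eq_or_ne u v with rfl | hne
  · obtain rfl : u' = v' := by rw [hu] at hv; exact Option.some_inj.mp hv
    simp [star_adj]
  · have hne' : u' ≠ v' := fun e => hne (hinj u v u' hu (by rw [hv, e]))
    rw [star_adj, star_adj]
    exact ⟨fun hz => ⟨hne', (h u v u' v' hu hv hne).mp hz.2⟩,
           fun hz => ⟨hne, (h u v u' v' hu hv hne).mpr hz.2⟩⟩

/-! ### Counting partial injections -/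

def toPInj {A B : Type*} [DecidableEq A] (p : Σ s : Finset A, (↥s ↪ B)) :
    {f : A → Option B // ∀ u v w, f u = some w → f v = some w → u = v} :=
  ⟨fun x => if h : x ∈ p.1 then some (p.2 ⟨x, h⟩) else none, by
    intro u v w hu hv
    dsimp only at hu hv
    by_cases hus : u ∈ p.1
    · by_cases hvs : v ∈ p.1
      · rw [dif_pos hus] at hu
        rw [dif_pos hvs] at hv
        have := p.2.injective (a₁ := ⟨u, hus⟩) (a₂ := ⟨v, hvs⟩)
          (by rw [Option.some_inj.mp hu, Option.some_inj.mp hv])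
        exact congrArg Subtype.val this
      · rw [dif_neg hvs] at hv; exact absurd hv (by simp)
    · rw [dif_neg hus] at hu; exact absurd hu (by simp)⟩

lemma toPInj_bijective {A B : Type*} [DecidableEq A] [Fintype A] [DecidableEq B] :
    Function.Bijective (toPInj (A := A) (B := B)) := by
  constructor
  · rintro ⟨s, e⟩ ⟨t, g⟩ h
    have hfun : ∀ x, (toPInj ⟨s, e⟩).1 x = (toPInj ⟨t, g⟩).1 x :=
      fun x => congrFun (congrArg Subtype.val h) x
    have hst : s = t := by
      ext x
      have hx2 := hfun x
      constructor
      · intro hx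
        by_contra hx'
        rw [show (toPInj ⟨s,e⟩).1 x = some (e ⟨x, hx⟩) from dif_pos hx,
            show (toPInj ⟨t,g⟩).1 x = none from dif_neg hx'] at hx2
        exact absurd hx2 (by simp)
      · intro hx
        by_contra hx'
        rw [show (toPInj ⟨s,e⟩).1 x = none from dif_neg hx',
            show (toPInj ⟨t,g⟩).1 x = some (g ⟨x, hx⟩) from dif_pos hx] at hx2
        exact absurd hx2 (by simp)
    subst hst
    have heg : e = g := by
      ext x
      have hx2 := hfun x.1
      rw [show (toPInj ⟨s,e⟩).1 x.1 = some (e ⟨x.1, x.2⟩) from dif_pos x.2,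
          show (toPInj ⟨s,g⟩).1 x.1 = some (g ⟨x.1, x.2⟩) from dif_pos x.2] at hx2
      exact Option.some_inj.mp hx2
    rw [heg]
  · rintro ⟨f, hf⟩
    have hmem : ∀ x : ↥(Finset.univ.filter (fun x => (f x).isSome)), (f x.1).isSome := by
      intro x
      have hx := x.2
      simp only [Finset.mem_filter, Finset.mem_univ, true_and] at hx
      exact hx
    refine ⟨⟨Finset.univ.filter (fun x => (f x).isSome),
      ⟨fun x => (f x.1).get (hmem x), ?_⟩⟩, ?_⟩
    · intro a b hab
      dsimp only at hab
      have ha' : f a.1 = some ((f a.1).get (hmem a)) := (Option.some_get (hmem a)).symm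
      have hb' : f b.1 = some ((f b.1).get (hmem b)) := (Option.some_get (hmem b)).symm
      refine Subtype.ext (hf a.1 b.1 ((f b.1).get (hmem b)) ?_ hb')
      rw [ha']
      exact congrArg some hab
    · apply Subtype.ext
      funext x
      by_cases hx : x ∈ Finset.univ.filter (fun x => (f x).isSome)
      · show dite _ _ _ = f x
        rw [dif_pos hx]
        exact Option.some_get (hmem ⟨x, hx⟩)
      · show dite _ _ _ = f x
        rw [dif_neg hx]
        simp only [Finset.mem_filter, Finset.mem_univ, true_and] at hx
        exact (Option.not_isSome_iff_eq_none.mp hx).symm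

lemma card_pinj (A B : Type*) [Fintype A] [DecidableEq A] [Fintype B] [DecidableEq B] :
    Nat.card {f : A → Option B // ∀ u v w, f u = some w → f v = some w → u = v} =
      ∑ k ∈ Finset.range (Fintype.card A + 1),
        (Fintype.card A).choose k * (Fintype.card B).descFactorial k := by
  classical
  rw [← Nat.card_eq_of_bijective _ (toPInj_bijective (A := A) (B := B))]
  rw [Nat.card_eq_fintype_card, Fintype.card_sigma]
  have hemb : ∀ s : Finset A, Fintype.card (↥s ↪ B) =
      (Fintype.card B).descFactorial s.card := by
    intro s
    rw [Fintype.card_embedding_eq, Fintype.card_coe]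
  simp_rw [hemb]
  rw [← Finset.powerset_univ, Finset.sum_powerset, Finset.card_univ]
  refine Finset.sum_congr rfl fun k _ => ?_
  have : ∀ t ∈ Finset.powersetCard k (Finset.univ : Finset A),
      (Fintype.card B).descFactorial t.card = (Fintype.card B).descFactorial k := by
    intro t ht
    rw [(Finset.mem_powersetCard.mp ht).2]
  rw [Finset.sum_congr rfl this, Finset.sum_const, Finset.card_powersetCard,
    Finset.card_univ, smul_eq_mul]

/-! ### The five families of partial automorphisms of the star -/

abbrev Lv (n : ℕ) [NeZero n] := {x : Fin n // x ≠ 0}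

def mapA (f : PTrans (Lv n)) : PTrans (Fin n) :=
  fun x => if h : x = 0 then some 0 else Option.map Subtype.val (f ⟨x, h⟩)

def mapB (f : PTrans (Lv n)) : PTrans (Fin n) :=
  fun x => if h : x = 0 then none else Option.map Subtype.val (f ⟨x, h⟩)

def mapS (l : Lv n) : PTrans (Fin n) :=
  fun x => if x = l.1 then some 0 else none

def mapC (a : Lv n) : PTrans (Fin n) :=
  fun x => if x = 0 then some a.1 else none

def mapD (a l : Lv n) : PTrans (Fin n) :=
  fun x => if x = 0 then some a.1 else if x = l.1 then some 0 else none

lemma mapA_zero_iff {f : PTrans (Lv n)} {u u' : Fin n} (h : mapA f u = some u') :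
    u = 0 ↔ u' = 0 := by
  unfold mapA at h
  split_ifs at h with h0
  · exact iff_of_true h0 (Option.some_inj.mp h).symm
  · obtain ⟨y, _, rfl⟩ := Option.map_eq_some_iff.mp h
    exact iff_of_false h0 y.2

lemma mapB_spec {f : PTrans (Lv n)} {u u' : Fin n} (h : mapB f u = some u') :
    u ≠ 0 ∧ u' ≠ 0 := by
  unfold mapB at h
  split_ifs at h with h0
  obtain ⟨y, _, rfl⟩ := Option.map_eq_some_iff.mp h
  exact ⟨h0, y.2⟩

lemma mapS_spec {l : Lv n} {u u' : Fin n} (h : mapS l u = some u') :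
    u = l.1 ∧ u' = 0 := by
  unfold mapS at h
  split_ifs at h with h0
  exact ⟨h0, (Option.some_inj.mp h).symm⟩

lemma mapC_spec {a : Lv n} {u u' : Fin n} (h : mapC a u = some u') :
    u = 0 ∧ u' = a.1 := by
  unfold mapC at h
  split_ifs at h with h0
  exact ⟨h0, (Option.some_inj.mp h).symm⟩

lemma mapD_spec {a l : Lv n} {u u' : Fin n} (h : mapD a l u = some u') :
    (u = 0 ∧ u' = a.1) ∨ (u = l.1 ∧ u' = 0) := by
  unfold mapD at h
  split_ifs at h with h0 h1
  · exact Or.inl ⟨h0, (Option.some_inj.mp h).symm⟩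
  · exact Or.inr ⟨h1, (Option.some_inj.mp h).symm⟩

lemma pinj_mapA {f : PTrans (Lv n)} (hf : PInjective f) : PInjective (mapA f) := by
  intro u v w hu hv
  unfold mapA at hu hv
  by_cases h0 : u = 0 <;> by_cases h1 : v = 0
  · rw [h0, h1]
  · rw [dif_pos h0] at hu
    rw [dif_neg h1] at hv
    obtain rfl : (0 : Fin n) = w := Option.some_inj.mp hu
    obtain ⟨y, _, hy⟩ := Option.map_eq_some_iff.mp hv
    exact absurd hy y.2
  · rw [dif_neg h0] at hu
    rw [dif_pos h1] at hv
    obtain rfl : (0 : Fin n) = w := Option.some_inj.mp hv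
    obtain ⟨y, _, hy⟩ := Option.map_eq_some_iff.mp hu
    exact absurd hy y.2
  · rw [dif_neg h0] at hu
    rw [dif_neg h1] at hv
    obtain ⟨y, hy, hyw⟩ := Option.map_eq_some_iff.mp hu
    obtain ⟨z, hz, hzw⟩ := Option.map_eq_some_iff.mp hv
    obtain rfl : y = z := Subtype.ext (hyw.trans hzw.symm)
    exact congrArg Subtype.val (hf _ _ y hy hz)

lemma pinj_mapB {f : PTrans (Lv n)} (hf : PInjective f) : PInjective (mapB f) := by
  intro u v w hu hv
  unfold mapB at hu hv
  by_cases h0 : u = 0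
  · rw [dif_pos h0] at hu
    exact absurd hu (by simp)
  · by_cases h1 : v = 0
    · rw [dif_pos h1] at hv
      exact absurd hv (by simp)
    · rw [dif_neg h0] at hu
      rw [dif_neg h1] at hv
      obtain ⟨y, hy, hyw⟩ := Option.map_eq_some_iff.mp hu
      obtain ⟨z, hz, hzw⟩ := Option.map_eq_some_iff.mp hv
      obtain rfl : y = z := Subtype.ext (hyw.trans hzw.symm)
      exact congrArg Subtype.val (hf _ _ y hy hz)

lemma isPAut_mapA {f : PTrans (Lv n)} (hf : PInjective f) :
    IsPAut (starGraph n) (mapA f) := by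
  rw [isPAut_iff]
  refine ⟨pinj_mapA hf, psEnd_crit (pinj_mapA hf) ?_⟩
  intro u v u' v' hu hv _
  exact or_congr (mapA_zero_iff hu) (mapA_zero_iff hv)

lemma isPAut_mapB {f : PTrans (Lv n)} (hf : PInjective f) :
    IsPAut (starGraph n) (mapB f) := by
  rw [isPAut_iff]
  refine ⟨pinj_mapB hf, psEnd_crit (pinj_mapB hf) ?_⟩
  intro u v u' v' hu hv _
  obtain ⟨hu0, hu0'⟩ := mapB_spec hu
  obtain ⟨hv0, hv0'⟩ := mapB_spec hv
  exact iff_of_false (by tauto) (by tauto)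

lemma isPAut_mapS (l : Lv n) : IsPAut (starGraph n) (mapS l) := by
  rw [isPAut_iff]
  have hinj : PInjective (mapS l) := by
    intro u v w hu hv
    rw [(mapS_spec hu).1, (mapS_spec hv).1]
  refine ⟨hinj, psEnd_crit hinj ?_⟩
  intro u v u' v' hu hv hne
  exact absurd ((mapS_spec hu).1.trans (mapS_spec hv).1.symm) hne

lemma isPAut_mapC (a : Lv n) : IsPAut (starGraph n) (mapC a) := by
  rw [isPAut_iff]
  have hinj : PInjective (mapC a) := by
    intro u v w hu hv
    rw [(mapC_spec hu).1, (mapC_spec hv).1]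
  refine ⟨hinj, psEnd_crit hinj ?_⟩
  intro u v u' v' hu hv hne
  exact absurd ((mapC_spec hu).1.trans (mapC_spec hv).1.symm) hne

lemma isPAut_mapD (a l : Lv n) : IsPAut (starGraph n) (mapD a l) := by
  rw [isPAut_iff]
  have hinj : PInjective (mapD a l) := by
    intro u v w hu hv
    rcases mapD_spec hu with ⟨h1, h2⟩ | ⟨h1, h2⟩ <;>
      rcases mapD_spec hv with ⟨h3, h4⟩ | ⟨h3, h4⟩
    · rw [h1, h3]
    · exact absurd (h2.symm.trans h4) a.2
    · exact absurd (h4.symm.trans h2) a.2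
    · rw [h1, h3]
  refine ⟨hinj, psEnd_crit hinj ?_⟩
  intro u v u' v' hu hv hne
  rcases mapD_spec hu with ⟨h1, h2⟩ | ⟨h1, h2⟩ <;>
    rcases mapD_spec hv with ⟨h3, h4⟩ | ⟨h3, h4⟩
  · exact absurd (h1.trans h3.symm) hne
  · exact iff_of_true (Or.inl h1) (Or.inr h4)
  · exact iff_of_true (Or.inr h3) (Or.inl h2)
  · exact absurd (h1.trans h3.symm) hne

abbrev PInjT (n : ℕ) [NeZero n] := {f : PTrans (Lv n) // PInjective f}

abbrev ClassT (n : ℕ) [NeZero n] :=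
  (PInjT n ⊕ PInjT n) ⊕ (Lv n ⊕ Lv n ⊕ Lv n × Lv n)

def bigMap : ClassT n → {α : PTrans (Fin n) // IsPAut (starGraph n) α}
  | .inl (.inl f) => ⟨mapA f.1, isPAut_mapA f.2⟩
  | .inl (.inr f) => ⟨mapB f.1, isPAut_mapB f.2⟩
  | .inr (.inl l) => ⟨mapS l, isPAut_mapS l⟩
  | .inr (.inr (.inl a)) => ⟨mapC a, isPAut_mapC a⟩
  | .inr (.inr (.inr p)) => ⟨mapD p.1 p.2, isPAut_mapD p.1 p.2⟩

/-! evaluation lemmas -/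

lemma mapA_zero (f : PTrans (Lv n)) : mapA f 0 = some 0 := dif_pos rfl
lemma mapB_zero (f : PTrans (Lv n)) : mapB f 0 = none := dif_pos rfl
lemma mapS_zero (l : Lv n) : mapS l 0 = none := if_neg (fun e => l.2 e.symm)
lemma mapC_zero (a : Lv n) : mapC a 0 = some a.1 := if_pos rfl
lemma mapD_zero (a l : Lv n) : mapD a l 0 = some a.1 := if_pos rfl
lemma mapS_self (l : Lv n) : mapS l l.1 = some 0 := if_pos rfl
lemma mapD_self (a l : Lv n) : mapD a l l.1 = some 0 := by
  unfold mapD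
  rw [if_neg l.2, if_pos rfl]

lemma bigMap_injective : Function.Injective (bigMap (n := n)) := by
  intro p q h
  have hα : ∀ x, (bigMap p).1 x = (bigMap q).1 x :=
    fun x => congrFun (congrArg Subtype.val h) x
  clear h
  rcases p with (⟨f, hf⟩ | ⟨f, hf⟩) | (l | a | ⟨a, l⟩) <;>
    rcases q with (⟨g, hg⟩ | ⟨g, hg⟩) | (l' | a' | ⟨a', l'⟩)
  -- A A
  · have hfg : f = g := by
      funext x
      have hx : mapA f x.1 = mapA g x.1 := hα x.1
      unfold mapA at hx
      rw [dif_neg x.2, dif_neg x.2] at hx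
      exact Option.map_injective Subtype.val_injective hx
    exact congrArg (fun t => Sum.inl (Sum.inl t)) (Subtype.ext hfg)
  -- A B
  · exact absurd ((mapA_zero f).symm.trans ((hα 0).trans (mapB_zero g))) (by simp)
  -- A S
  · exact absurd ((mapA_zero f).symm.trans ((hα 0).trans (mapS_zero l'))) (by simp)
  -- A C
  · have := Option.some_inj.mp ((mapA_zero f).symm.trans ((hα 0).trans (mapC_zero a')))
    exact absurd this.symm a'.2
  -- A D
  · have := Option.some_inj.mp ((mapA_zero f).symm.trans ((hα 0).trans (mapD_zero a' l')))
    exact absurd this.symm a'.2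
  -- B A
  · exact absurd ((mapB_zero f).symm.trans ((hα 0).trans (mapA_zero g))) (by simp)
  -- B B
  · have hfg : f = g := by
      funext x
      have hx : mapB f x.1 = mapB g x.1 := hα x.1
      unfold mapB at hx
      rw [dif_neg x.2, dif_neg x.2] at hx
      exact Option.map_injective Subtype.val_injective hx
    exact congrArg (fun t => Sum.inl (Sum.inr t)) (Subtype.ext hfg)
  -- B S
  · have hx : mapB f l'.1 = some 0 := (hα l'.1).trans (mapS_self l')
    exact absurd rfl (mapB_spec hx).2
  -- B C
  · exact absurd ((mapB_zero f).symm.trans ((hα 0).trans (mapC_zero a'))) (by simp)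
  -- B D
  · exact absurd ((mapB_zero f).symm.trans ((hα 0).trans (mapD_zero a' l'))) (by simp)
  -- S A
  · exact absurd ((mapA_zero g).symm.trans (((hα 0).symm).trans (mapS_zero l))) (by simp)
  -- S B
  · have hx : mapB g l.1 = some 0 := ((hα l.1).symm).trans (mapS_self l)
    exact absurd rfl (mapB_spec hx).2
  -- S S
  · have hx : mapS l' l.1 = some 0 := ((hα l.1).symm).trans (mapS_self l)
    exact congrArg (fun t => Sum.inr (Sum.inl t)) (Subtype.ext (mapS_spec hx).1)
  -- S C
  · have hx : mapC a' 0 = none := ((hα 0).symm).trans (mapS_zero l)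
    rw [mapC_zero] at hx
    exact absurd hx (by simp)
  -- S D
  · have hx : mapD a' l' 0 = none := ((hα 0).symm).trans (mapS_zero l)
    rw [mapD_zero] at hx
    exact absurd hx (by simp)
  -- C A
  · have := Option.some_inj.mp ((mapA_zero g).symm.trans (((hα 0).symm).trans (mapC_zero a)))
    exact absurd this.symm a.2
  -- C B
  · exact absurd ((mapB_zero g).symm.trans (((hα 0).symm).trans (mapC_zero a))) (by simp)
  -- C S
  · have hx : mapC a 0 = none := (hα 0).trans (mapS_zero l')
    rw [mapC_zero] at hx
    exact absurd hx (by simp)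
  -- C C
  · have := Option.some_inj.mp ((mapC_zero a).symm.trans ((hα 0).trans (mapC_zero a')))
    exact congrArg (fun t => Sum.inr (Sum.inr (Sum.inl t))) (Subtype.ext this)
  -- C D
  · have hx : mapC a l'.1 = some 0 := (hα l'.1).trans (mapD_self a' l')
    exact absurd (mapC_spec hx).1 l'.2
  -- D A
  · have := Option.some_inj.mp ((mapA_zero g).symm.trans (((hα 0).symm).trans (mapD_zero a l)))
    exact absurd this.symm a.2
  -- D B
  · exact absurd ((mapB_zero g).symm.trans (((hα 0).symm).trans (mapD_zero a l))) (by simp)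
  -- D S
  · have hx : mapD a l 0 = none := (hα 0).trans (mapS_zero l')
    rw [mapD_zero] at hx
    exact absurd hx (by simp)
  -- D C
  · have hx : mapC a' l.1 = some 0 := ((hα l.1).symm).trans (mapD_self a l)
    exact absurd (mapC_spec hx).1 l.2
  -- D D
  · have h1 : a = a' := by
      have := Option.some_inj.mp ((mapD_zero a l).symm.trans ((hα 0).trans (mapD_zero a' l')))
      exact Subtype.ext this
    have h2 : l = l' := by
      have hx : mapD a' l' l.1 = some 0 := ((hα l.1).symm).trans (mapD_self a l)
      rcases mapD_spec hx with ⟨hc, _⟩ | ⟨hc, _⟩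
      · exact absurd hc l.2
      · exact Subtype.ext hc
    rw [h1, h2]

/-! restriction to the leaves -/

def restr (α : PTrans (Fin n)) : PTrans (Lv n) := fun x =>
  match α x.1 with
  | none => none
  | some y => if h : y = 0 then none else some ⟨y, h⟩

lemma restr_eq_some {α : PTrans (Fin n)} {x : Lv n} {w : Lv n} :
    restr α x = some w ↔ α x.1 = some w.1 := by
  unfold restr
  rcases hx : α x.1 with _ | y
  · simp
  · show (if h : y = 0 then none else some ⟨y, h⟩) = some w ↔ _
    split_ifs with hy
    · subst hy
      refine iff_of_false (by simp) ?_
      intro h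
      exact w.2 (Option.some_inj.mp h).symm
    · simp [Subtype.ext_iff]

lemma restr_pinj {α : PTrans (Fin n)} (h : PInjective α) : PInjective (restr α) :=
  fun u v w hu hv =>
    Subtype.ext (h u.1 v.1 w.1 (restr_eq_some.mp hu) (restr_eq_some.mp hv))

lemma map_restr {α : PTrans (Fin n)} {x : Lv n}
    (h : ∀ y, α x.1 = some y → y ≠ 0) :
    Option.map Subtype.val (restr α x) = α x.1 := by
  unfold restr
  rcases hx : α x.1 with _ | y
  · rfl
  · show Option.map Subtype.val (if h : y = 0 then none else some ⟨y, h⟩) = some y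
    rw [dif_neg (h y hx)]
    rfl

lemma bigMap_surjective : Function.Surjective (bigMap (n := n)) := by
  rintro ⟨α, hA⟩
  obtain ⟨hinj, hs⟩ := isPAut_iff.mp hA
  rcases h0 : α 0 with _ | z
  · by_cases h2 : ∃ x, α x = some 0
    · -- family S
      obtain ⟨l, hl⟩ := h2
      have hl0 : l ≠ 0 := by
        rintro rfl
        rw [h0] at hl
        exact absurd hl (by simp)
      refine ⟨.inr (.inl ⟨l, hl0⟩), Subtype.ext (funext fun x => ?_)⟩
      show mapS ⟨l, hl0⟩ x = α x
      unfold mapS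
      split_ifs with hx
      · rw [hx, hl]
      · rcases hy : α x with _ | y
        · rfl
        · exfalso
          have hx0 : x ≠ 0 := by
            rintro rfl
            rw [h0] at hy
            exact absurd hy (by simp)
          have hy0 : y ≠ 0 := fun e => hx (hinj x l 0 (e ▸ hy) hl)
          have hiff := hs l x 0 y hl hy
          rw [star_adj, star_adj] at hiff
          have := (hiff.mpr ⟨Ne.symm hy0, Or.inl rfl⟩).2
          rcases this with h' | h'
          · exact hl0 h'
          · exact hx0 h'
    · -- family B
      push_neg at h2
      refine ⟨.inl (.inr ⟨restr α, restr_pinj hinj⟩), Subtype.ext (funext fun x => ?_)⟩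
      show mapB (restr α) x = α x
      unfold mapB
      split_ifs with hx
      · rw [hx, h0]
      · exact map_restr (fun y hy => fun e => h2 x (by rw [hy, e]))
  · rcases eq_or_ne z 0 with rfl | hz
    · -- family A
      refine ⟨.inl (.inl ⟨restr α, restr_pinj hinj⟩), Subtype.ext (funext fun x => ?_)⟩
      show mapA (restr α) x = α x
      unfold mapA
      split_ifs with hx
      · rw [hx, h0]
      · refine map_restr (fun y hy => fun e => hx ?_)
        exact hinj x 0 0 (by rw [hy, e]) h0
    · -- families C and D; first: every leaf in the domain goes to 0
      have hkey : ∀ x y : Fin n, x ≠ 0 → α x = some y → y = 0 := by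
        intro x y hx hy
        have hiff := hs 0 x z y h0 hy
        rw [star_adj, star_adj] at hiff
        have := (hiff.mp ⟨Ne.symm hx, Or.inl rfl⟩).2
        rcases this with h' | h'
        · exact absurd h' hz
        · exact h'
      by_cases h2 : ∃ x, α x = some 0
      · -- family D
        obtain ⟨l, hl⟩ := h2
        have hl0 : l ≠ 0 := by
          rintro rfl
          rw [h0] at hl
          exact hz (Option.some_inj.mp hl)
        refine ⟨.inr (.inr (.inr (⟨z, hz⟩, ⟨l, hl0⟩))), Subtype.ext (funext fun x => ?_)⟩
        show mapD ⟨z, hz⟩ ⟨l, hl0⟩ x = α x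
        unfold mapD
        split_ifs with hx hx'
        · rw [hx, h0]
        · rw [hx', hl]
        · rcases hy : α x with _ | y
          · rfl
          · exact absurd (hinj x l 0 ((hkey x y hx hy) ▸ hy) hl) hx'
      · -- family C
        push_neg at h2
        refine ⟨.inr (.inr (.inl ⟨z, hz⟩)), Subtype.ext (funext fun x => ?_)⟩
        show mapC ⟨z, hz⟩ x = α x
        unfold mapC
        split_ifs with hx
        · rw [hx, h0]
        · rcases hy : α x with _ | y
          · rfl
          · exact absurd (by rw [hy, hkey x y hx hy]) (h2 x)

end Aux

theorem stmt8 (n : ℕ) (hn : 3 ≤ n) :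
    Nat.card {α : PTrans (Fin n) // IsPAut (starGraph n) α} =
      1 + n ^ 2 + 2 * ∑ k ∈ Finset.Icc 1 (n - 1), (n - 1).choose k ^ 2 * k.factorial := by
  haveI : NeZero n := ⟨by omega⟩
  obtain ⟨m, rfl⟩ : ∃ m, n = m + 1 := ⟨n - 1, by omega⟩
  rw [← Nat.card_eq_of_bijective _ ⟨bigMap_injective, bigMap_surjective⟩]
  have hLf : Fintype.card (Lv (m+1)) = m := by
    have h1 : Fintype.card {x : Fin (m+1) // ¬ (x = 0)} =
        Fintype.card (Fin (m+1)) - Fintype.card {x : Fin (m+1) // x = 0} :=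
      Fintype.card_subtype_compl _
    rw [Fintype.card_fin, Fintype.card_subtype_eq] at h1
    exact h1
  have hL : Nat.card (Lv (m+1)) = m := by rw [Nat.card_eq_fintype_card, hLf]
  have hP : Nat.card (PInjT (m+1)) =
      ∑ k ∈ Finset.range (m + 1), m.choose k * m.descFactorial k := by
    have := card_pinj (Lv (m+1)) (Lv (m+1))
    rwa [hLf] at this
  have hsum : ∑ k ∈ Finset.range (m + 1), m.choose k * m.descFactorial k =
      1 + ∑ k ∈ Finset.Icc 1 m, m.choose k ^ 2 * k.factorial := by
    have e1 : (Finset.range (m+1)).erase 0 = Finset.Icc 1 m := by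
      ext x
      simp only [Finset.mem_erase, Finset.mem_range, Finset.mem_Icc]
      omega
    rw [← Finset.add_sum_erase _ _ (Finset.mem_range.mpr (Nat.succ_pos m)), e1]
    simp only [Nat.choose_zero_right, Nat.descFactorial_zero, mul_one]
    congr 1
    refine Finset.sum_congr rfl fun k _ => ?_
    rw [Nat.descFactorial_eq_factorial_mul_choose]
    ring
  rw [show ClassT (m+1) = ((PInjT (m+1) ⊕ PInjT (m+1)) ⊕
      (Lv (m+1) ⊕ Lv (m+1) ⊕ Lv (m+1) × Lv (m+1))) from rfl,
    Nat.card_sum, Nat.card_sum, Nat.card_sum, Nat.card_sum, Nat.card_prod, hP, hL, hsum,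
    Nat.add_sub_cancel]
  ring
end

section
/- Let n ≥ 3. The monoid 2PT_{n−1} := PT({1,...,n−1})ζ ∪ PT({1,...,n−1}), where ζ extends a partial map by fixing 0, is a submonoid of PT({0,1,...,n−1}) of cardinality 2·n^{n−1}, and both PT({1,...,n−1})ζ and PT({1,...,n−1}) (viewed inside PT({0,...,n−1})) are contained in the monoid of partial strong endomorphisms of the star graph S_n. -/
variable {V : Type*}

/-! A partial map on `V` lies in `PT(V \ {z})ζ ∪ PT(V \ {z})` exactly when it respects the
partition `{z} | V \ {z}`: wherever it is defined it sends `z` to `z` and every other point to a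
point other than `z`. In this form closure under composition is immediate, and such a map is a free
choice of its value at `z` (undefined or `z`) together with a value in `Option (V \ {z})` at each
of the `n - 1` other points, whence `2 * n ^ (n - 1)` of them. Adjacency in the star graph means
that exactly one endpoint is the centre, so these maps preserve and reflect it. -/

namespace PTrans

def RespectsPoint (z : V) (α : PTrans V) : Prop :=
  ∀ i j, α i = some j → (i = z ↔ j = z)

theorem setOf_respectsPoint_eq_union (z : V) :
    {α : PTrans V | RespectsPoint z α} =
      {α | α z = some z ∧ ∀ i, i ≠ z → ∀ j, α i = some j → j ≠ z} ∪
        {α | α z = none ∧ ∀ i j, α i = some j → j ≠ z} := by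
  ext α
  constructor
  · intro hα
    cases hz : α z with
    | none =>
      refine Or.inr ⟨hz, fun i j hij hj => ?_⟩
      rw [(hα i j hij).2 hj, hz] at hij
      cases hij
    | some k =>
      exact Or.inl ⟨by rw [hz, (hα z k hz).1 rfl],
        fun i hi j hij hj => hi ((hα i j hij).2 hj)⟩
  · rintro (⟨hz, hα⟩ | ⟨hz, hα⟩) i j hij
    · by_cases hi : i = z
      · subst hi
        rw [hz] at hij
        cases hij
        simp
      · simp [hi, hα i hi j hij]
    · have hi : i ≠ z := by rintro rfl; rw [hz] at hij; cases hij
      simp [hi, hα i j hij]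

def respectsPointSubmonoid (z : V) : Submonoid (PTrans V) where
  carrier := {α | RespectsPoint z α}
  mul_mem' {α β} hα hβ i k hik := by
    obtain ⟨j, hij, hjk⟩ := Option.bind_eq_some_iff.mp hik
    exact (hα i j hij).trans (hβ j k hjk)
  one_mem' i j hij := by cases Option.some_injective _ hij; rfl

theorem natCard_option_subtype (q : V → Prop) :
    Nat.card {o : Option V // ∀ j, o = some j → q j} = Nat.card (Option {j // q j}) :=
  Nat.card_congr
    { toFun := fun
        | ⟨none, _⟩ => none
        | ⟨some j, h⟩ => some ⟨j, h j rfl⟩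
      invFun := fun
        | none => ⟨none, by simp⟩
        | some j => ⟨some j.1, by simpa using j.2⟩
      left_inv := by rintro ⟨_ | j, h⟩ <;> rfl
      right_inv := by rintro (_ | j) <;> rfl }

theorem natCard_respectsPoint [Finite V] (z : V) :
    Nat.card {α : PTrans V // RespectsPoint z α} = 2 * Nat.card V ^ (Nat.card V - 1) := by
  classical
  have := Fintype.ofFinite V
  unfold RespectsPoint
  rw [Nat.card_congr (Equiv.subtypePiEquivPi (p := fun i o => ∀ j, o = some j → (i = z ↔ j = z))),
    Nat.card_pi, Fintype.prod_eq_mul_prod_compl z]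
  simp only [natCard_option_subtype, Finite.card_option, true_iff]
  have hcompl : ∀ x ∈ ({z}ᶜ : Finset V), Nat.card {j // x = z ↔ j = z} + 1 = Nat.card V := by
    intro x hx
    have hx : x ≠ z := by simpa using hx
    have := Fintype.card_pos_iff.2 ⟨z⟩
    simp only [hx, false_iff, Nat.card_eq_fintype_card, Fintype.card_subtype_compl,
      Fintype.card_subtype_eq]
    omega
  rw [Finset.prod_congr rfl hcompl, Finset.prod_const, Finset.card_compl, Finset.card_singleton,
    Nat.card_eq_fintype_card]
  simp

end PTrans

theorem starGraph_adj_iff {n : ℕ} (hn : 0 < n) {u v : Fin n} :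
    (starGraph n).Adj u v ↔ ¬(u = ⟨0, hn⟩ ↔ v = ⟨0, hn⟩) := by
  simp only [starGraph, SimpleGraph.fromRel_adj, Fin.ext_iff, ne_eq]
  omega

theorem isPsEnd_starGraph_of_respectsPoint {n : ℕ} (hn : 0 < n) {α : PTrans (Fin n)}
    (hα : α.RespectsPoint ⟨0, hn⟩) : IsPsEnd (starGraph n) α := by
  intro u v u' v' hu hv
  rw [starGraph_adj_iff hn, starGraph_adj_iff hn, hα u u' hu, hα v v' hv]

theorem stmt19 (n : ℕ) (hn : 3 ≤ n) :
    (∃ S : Submonoid (PTrans (Fin n)),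
      (S : Set (PTrans (Fin n))) =
        {α | α ⟨0, by omega⟩ = some ⟨0, by omega⟩ ∧
            ∀ i : Fin n, i ≠ ⟨0, by omega⟩ → ∀ j, α i = some j → j ≠ ⟨0, by omega⟩} ∪
          {α | α ⟨0, by omega⟩ = none ∧ ∀ i j : Fin n, α i = some j → j ≠ ⟨0, by omega⟩}) ∧
    Set.ncard
        ({α : PTrans (Fin n) | α ⟨0, by omega⟩ = some ⟨0, by omega⟩ ∧
            ∀ i : Fin n, i ≠ ⟨0, by omega⟩ → ∀ j, α i = some j → j ≠ ⟨0, by omega⟩} ∪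
          {α : PTrans (Fin n) | α ⟨0, by omega⟩ = none ∧
            ∀ i j : Fin n, α i = some j → j ≠ ⟨0, by omega⟩}) = 2 * n ^ (n - 1) ∧
    {α : PTrans (Fin n) | α ⟨0, by omega⟩ = some ⟨0, by omega⟩ ∧
        ∀ i : Fin n, i ≠ ⟨0, by omega⟩ → ∀ j, α i = some j → j ≠ ⟨0, by omega⟩} ⊆
      {α | IsPsEnd (starGraph n) α} ∧
    {α : PTrans (Fin n) | α ⟨0, by omega⟩ = none ∧
        ∀ i j : Fin n, α i = some j → j ≠ ⟨0, by omega⟩} ⊆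
      {α | IsPsEnd (starGraph n) α} := by
  have h0 : 0 < n := by omega
  have hunion := PTrans.setOf_respectsPoint_eq_union (⟨0, h0⟩ : Fin n)
  have hstrong : {α | PTrans.RespectsPoint ⟨0, h0⟩ α} ⊆ {α | IsPsEnd (starGraph n) α} :=
    fun α => isPsEnd_starGraph_of_respectsPoint h0
  refine ⟨⟨PTrans.respectsPointSubmonoid ⟨0, h0⟩, hunion⟩, ?_,
    (Set.subset_union_left.trans hunion.symm.subset).trans hstrong,
    (Set.subset_union_right.trans hunion.symm.subset).trans hstrong⟩
  rw [← hunion, ← Nat.card_coe_set_eq]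
  exact (PTrans.natCard_respectsPoint _).trans (by rw [Nat.card_fin])
end
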